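/- arXiv:2302.12782 — 7 statements merged into one kernel-verified Lean document; each statement's English description precedes it below -/
import Mathlib

section
/- For every even natural number n ≥ 2 one has ∑_{k=0}^{n/2 - 1} (n - 2k) · C(n,k)² = n · C(n-1, n/2)². -/
/-!
Writing `c = C(n+1, k+1)`, Pascal's rule and `(n+1) C(n, k) = (k+1) c` give
`(n + 1 - 2(k+1)) c² = (n+1) (C(n, k+1)² - C(n, k)²)`, so the sum telescopes to
`(n+1) C(n, j)²` over `k ≤ j`. For `n + 1 = 2(j+1)` the symmetry `C(2j+1, j) = C(2j+1, j+1)`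
turns this into the right-hand side.
-/

open Finset

theorem sub_two_mul_mul_choose_succ_sq (n k : ℕ) :
    ((n + 1 : ℤ) - 2 * (k + 1)) * ((n + 1).choose (k + 1) : ℤ) ^ 2
      = (n + 1) * ((n.choose (k + 1) : ℤ) ^ 2 - (n.choose k : ℤ) ^ 2) := by
  have pascal : ((n + 1).choose (k + 1) : ℤ) = n.choose k + n.choose (k + 1) := by
    exact_mod_cast Nat.choose_succ_succ n k
  have absorb : (n + 1 : ℤ) * n.choose k = (n + 1).choose (k + 1) * (k + 1) := by
    exact_mod_cast Nat.add_one_mul_choose_eq n k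
  linear_combination
    ((n + 1 : ℤ) * ((n + 1).choose (k + 1) - n.choose k + n.choose (k + 1))) * pascal
      + 2 * ((n + 1).choose (k + 1) : ℤ) * absorb

theorem sum_range_sub_two_mul_mul_choose_sq (n j : ℕ) :
    ∑ k ∈ range (j + 1), ((n + 1 : ℤ) - 2 * k) * ((n + 1).choose k : ℤ) ^ 2
      = (n + 1) * (n.choose j : ℤ) ^ 2 := by
  induction j with
  | zero => simp
  | succ j ih =>
    rw [sum_range_succ, ih]
    push_cast
    rw [sub_two_mul_mul_choose_succ_sq]
    ring

theorem stmt_1_general (n : ℕ) (heven : Even n) :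
    ∑ k ∈ Finset.range (n / 2), (n - 2 * k) * (n.choose k) ^ 2
      = n * ((n - 1).choose (n / 2)) ^ 2 := by
  obtain ⟨m, rfl⟩ := heven
  rcases m with _ | j
  · simp
  have double : j + 1 + (j + 1) = 2 * j + 1 + 1 := by ring
  rw [double, Nat.add_sub_cancel, show (2 * j + 1 + 1) / 2 = j + 1 by omega,
    Nat.choose_symm_half, ← Nat.cast_inj (R := ℤ), Nat.cast_sum, Nat.cast_mul, Nat.cast_pow,
    Nat.cast_succ, ← sum_range_sub_two_mul_mul_choose_sq]
  refine sum_congr rfl fun k hk => ?_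
  have hk : 2 * k ≤ 2 * j + 1 + 1 := by rw [mem_range] at hk; omega
  push_cast [Nat.cast_sub hk]
  ring

theorem stmt_1 (n : ℕ) (hn : 2 ≤ n) (heven : Even n) :
    ∑ k ∈ Finset.range (n / 2), (n - 2 * k) * (n.choose k) ^ 2
      = n * ((n - 1).choose (n / 2)) ^ 2 :=
  stmt_1_general n heven
end

section
/- For every odd natural number n ≥ 3 one has 1 + ∑_{k=1}^{(n-1)/2} (n - 2k) · C(n,k)² + (n - 1) = n · C(n-1, (n-1)/2)²; equivalently, 1 + ∑_{d odd, 1≤d≤n-2} d · C(n,(n-d)/2)² = n · C(n-1,(n-1)/2)² − (n − 1). -/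
/-!
The sum telescopes: writing `a = C(n,k)`, `b = C(n,k+1)`, Pascal's rule `C(n+1,k+1) = a + b`
and `(n+1) a = (k+1) C(n+1,k+1)` give `(n-2k-1) C(n+1,k+1)² = (n+1) (b² - a²)`. Hence the terms
up to `k = m` add up to `(n+1) (C(n,m)² - 1)`, which for `n = 2m` is the identity.
-/

open Finset

theorem sub_mul_choose_succ_succ_sq (n k : ℕ) :
    ((n : ℤ) - 2 * k - 1) * (n + 1).choose (k + 1) ^ 2
      = (n + 1) * ((n.choose (k + 1) : ℤ) ^ 2 - (n.choose k : ℤ) ^ 2) := by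
  have hmul : ((n + 1 : ℕ) : ℤ) * n.choose k = (n + 1).choose (k + 1) * (k + 1 : ℕ) := by
    exact_mod_cast Nat.add_one_mul_choose_eq n k
  have hpascal : ((n + 1).choose (k + 1) : ℤ) = n.choose k + n.choose (k + 1) := by
    exact_mod_cast Nat.choose_succ_succ n k
  push_cast at hmul
  linear_combination
    2 * ((n.choose k : ℤ) + n.choose (k + 1)) * hmul
      + (((n : ℤ) - 2 * k - 1) * ((n + 1).choose (k + 1) + n.choose k + n.choose (k + 1))
        + 2 * ((n.choose k : ℤ) + n.choose (k + 1)) * (k + 1)) * hpascal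

theorem sum_Icc_sub_mul_choose_sq (n m : ℕ) :
    ∑ k ∈ Icc 1 m, ((n : ℤ) + 1 - 2 * k) * (n + 1).choose k ^ 2
      = (n + 1) * ((n.choose m : ℤ) ^ 2 - 1) := by
  induction m with
  | zero => simp
  | succ m ih =>
    rw [sum_Icc_succ_top (by omega), ih]
    push_cast
    linear_combination sub_mul_choose_succ_succ_sq n m

theorem stmt_2_general (n : ℕ) (hodd : Odd n) :
    1 + (∑ k ∈ Finset.Icc 1 ((n - 1) / 2), (n - 2 * k) * (n.choose k) ^ 2) + (n - 1)
      = n * ((n - 1).choose ((n - 1) / 2)) ^ 2 := by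
  obtain ⟨m, rfl⟩ := hodd
  rw [show (2 * m + 1 - 1) / 2 = m by omega, Nat.add_sub_cancel]
  zify
  have hsum : ∑ k ∈ Icc 1 m, ((2 * m + 1 - 2 * k : ℕ) : ℤ) * (2 * m + 1).choose k ^ 2
      = ∑ k ∈ Icc 1 m, ((2 * m : ℕ) + 1 - 2 * k : ℤ) * (2 * m + 1).choose k ^ 2 := by
    refine sum_congr rfl fun k hk => ?_
    rw [Nat.cast_sub (by rw [mem_Icc] at hk; omega)]
    push_cast
    ring
  rw [hsum, sum_Icc_sub_mul_choose_sq]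
  push_cast
  ring

theorem stmt_2 (n : ℕ) (hn : 3 ≤ n) (hodd : Odd n) :
    1 + (∑ k ∈ Finset.Icc 1 ((n - 1) / 2), (n - 2 * k) * (n.choose k) ^ 2) + (n - 1)
      = n * ((n - 1).choose ((n - 1) / 2)) ^ 2 :=
  stmt_2_general n hodd
end

section
/- For every even natural number n ≥ 2 one has C(n, n/2)² + ∑_{k=0}^{n/2 - 1} (n - 2k) · C(n,k)² = (n + 4) · C(n-1, n/2)². -/
/-!
Pascal's rule and `(n + 1) C(n, k) = (k + 1) C(n + 1, k + 1)` give
`(N - 2k) C(N, k) = N (C(N - 1, k) - C(N - 1, k - 1))`; multiplying by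
`C(N, k) = C(N - 1, k) + C(N - 1, k - 1)` makes `(N - 2k) C(N, k)²` the difference
`N (C(N - 1, k)² - C(N - 1, k - 1)²)`, so the sum telescopes to `N C(N - 1, N/2 - 1)²`.
For `N = 2j + 2` both this and `C(N, N/2) = 2 C(N - 1, j)` are multiples of
`C(2j + 1, j)² = C(2j + 1, j + 1)²`.
-/

open Finset

namespace Nat

theorem sub_two_mul_mul_choose_succ_sq (n k : ℕ) :
    ((n + 1 : ℤ) - 2 * (k + 1)) * ((n + 1).choose (k + 1) : ℤ) ^ 2
      = (n + 1) * ((n.choose (k + 1) : ℤ) ^ 2 - (n.choose k : ℤ) ^ 2) := by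
  have pascal : ((n + 1).choose (k + 1) : ℤ) = n.choose k + n.choose (k + 1) := by
    exact_mod_cast choose_succ_succ' n k
  have absorb : (n + 1 : ℤ) * n.choose k = (n + 1).choose (k + 1) * (k + 1) := by
    exact_mod_cast add_one_mul_choose_eq n k
  linear_combination
    (n + 1 : ℤ) * ((n + 1).choose (k + 1) - n.choose k + n.choose (k + 1)) * pascal
      + 2 * ((n + 1).choose (k + 1) : ℤ) * absorb

theorem sum_range_sub_two_mul_mul_choose_sq (n m : ℕ) :
    ∑ k ∈ range (m + 1), ((n + 1 : ℤ) - 2 * k) * ((n + 1).choose k : ℤ) ^ 2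
      = (n + 1) * (n.choose m : ℤ) ^ 2 := by
  induction m with
  | zero => simp
  | succ m ih =>
    rw [sum_range_succ, ih]
    push_cast
    rw [sub_two_mul_mul_choose_succ_sq]
    ring

theorem choose_two_mul_add_two_succ (j : ℕ) :
    (2 * j + 2).choose (j + 1) = 2 * (2 * j + 1).choose j := by
  rw [choose_succ_succ' (2 * j + 1) j, choose_symm_half]
  ring

end Nat

theorem stmt_3 (n : ℕ) (hn : 2 ≤ n) (heven : Even n) :
    (n.choose (n / 2)) ^ 2 + ∑ k ∈ Finset.range (n / 2), (n - 2 * k) * (n.choose k) ^ 2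
      = (n + 4) * ((n - 1).choose (n / 2)) ^ 2 := by
  obtain ⟨j, rfl⟩ : ∃ j, n = 2 * j + 2 := by
    obtain ⟨m, rfl⟩ := heven
    exact ⟨m - 1, by omega⟩
  rw [show (2 * j + 2) / 2 = j + 1 by omega, show 2 * j + 2 - 1 = 2 * j + 1 by omega]
  have sum_cast : ((∑ k ∈ range (j + 1), (2 * j + 2 - 2 * k) * (2 * j + 2).choose k ^ 2 : ℕ) : ℤ)
      = ∑ k ∈ range (j + 1), (((2 * j + 1 : ℕ) + 1 : ℤ) - 2 * k)
          * ((2 * j + 1 + 1).choose k : ℤ) ^ 2 := by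
    push_cast
    refine sum_congr rfl fun k hk => ?_
    rw [Nat.cast_sub (by simp at hk; omega)]
    push_cast
    ring
  apply Nat.cast_injective (R := ℤ)
  push_cast only [Nat.cast_add, Nat.cast_mul, Nat.cast_pow]
  rw [sum_cast, Nat.sum_range_sub_two_mul_mul_choose_sq, Nat.choose_two_mul_add_two_succ,
    Nat.choose_symm_half]
  push_cast
  ring
end

section
/- For every even natural number n ≥ 2 one has 1 + ∑_{k=1}^{n/2 - 1} (n/2 - k) · C(n,k)² + (n/2 - 1) = (n/2) · C(n-1, n/2)²; equivalently, 1 + ∑_{d even, 2≤d≤n-2} (d/2) · C(n,(n-d)/2)² = (n/2)·C(n-1,n/2)² − (n/2 − 1). -/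
/-! Pascal's rule and `(j + 1) C(n, j+1) = (n - j) C(n, j)` make `(n + 1) C(n, j)²` telescope:
`∑_{k ≤ j} (n + 1 - 2k) C(n+1, k)² = (n + 1) C(n, j)²`. For `n + 1 = 2m` and `j = m - 1` this is twice
the claim, once the `k = 0` term `m` is split as `1 + (m - 1)` and `C(2m-1, m-1) = C(2m-1, m)` is used. -/
open Finset

theorem choose_succ_sq_telescope (n j : ℕ) :
    ((n : ℤ) + 1) * ((n.choose (j + 1) : ℤ) ^ 2 - (n.choose j : ℤ) ^ 2)
      = ((n : ℤ) - 2 * j - 1) * ((n + 1).choose (j + 1) : ℤ) ^ 2 := by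
  obtain hj | hj := le_or_gt j n
  · have hpascal : ((n + 1).choose (j + 1) : ℤ) = n.choose j + n.choose (j + 1) := by
      exact_mod_cast Nat.choose_succ_succ' n j
    have hratio : (n.choose (j + 1) : ℤ) * (j + 1) = n.choose j * (n - j) := by
      exact_mod_cast Nat.choose_succ_right_eq n j
    rw [hpascal]
    linear_combination (2 * ((n.choose j : ℤ) + n.choose (j + 1))) * hratio
  · simp [Nat.choose_eq_zero_of_lt, hj, hj.trans (Nat.lt_succ_self j)]

theorem sum_range_mul_choose_sq (n j : ℕ) :
    ∑ k ∈ range (j + 1), ((n : ℤ) + 1 - 2 * k) * ((n + 1).choose k : ℤ) ^ 2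
      = (n + 1) * (n.choose j : ℤ) ^ 2 := by
  induction j with
  | zero => simp
  | succ j ih =>
    rw [sum_range_succ, ih]
    push_cast
    linear_combination (choose_succ_sq_telescope n j).symm

theorem sum_range_sub_mul_choose_sq (p : ℕ) :
    ∑ k ∈ range (p + 1), (p + 1 - k) * (2 * p + 2).choose k ^ 2
      = (p + 1) * (2 * p + 1).choose (p + 1) ^ 2 := by
  rw [Nat.choose_symm_half]
  have hcast : ∀ k ∈ range (p + 1), (((p + 1 - k : ℕ) : ℤ) * ((2 * p + 2).choose k : ℤ) ^ 2)
      = ((p : ℤ) + 1 - k) * ((2 * p + 2).choose k : ℤ) ^ 2 := by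
    intro k hk
    rw [Nat.cast_sub (mem_range.1 hk).le]
    push_cast; ring
  zify
  rw [sum_congr rfl hcast]
  apply mul_left_cancel₀ (two_ne_zero (α := ℤ))
  rw [mul_sum]
  convert sum_range_mul_choose_sq (2 * p + 1) p using 1
  · refine sum_congr rfl fun k _ => ?_
    push_cast; ring
  · push_cast; ring

theorem stmt_5 (n : ℕ) (hn : 2 ≤ n) (heven : Even n) :
    1 + (∑ k ∈ Finset.Icc 1 (n / 2 - 1), (n / 2 - k) * (n.choose k) ^ 2) + (n / 2 - 1)
      = (n / 2) * ((n - 1).choose (n / 2)) ^ 2 := by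
  obtain ⟨p, rfl⟩ : ∃ p, n = 2 * p + 2 := ⟨n / 2 - 1, by grind⟩
  have hsplit : range (p + 1) = insert 0 (Icc 1 p) := by ext; simp only [mem_range, Order.lt_add_one_iff, mem_insert, mem_Icc]; omega
  rw [show (2 * p + 2) / 2 = p + 1 by omega, show 2 * p + 2 - 1 = 2 * p + 1 by omega,
    Nat.add_sub_cancel, ← sum_range_sub_mul_choose_sq, hsplit, sum_insert (by simp)]
  simp only [tsub_zero, Nat.choose_zero_right, one_pow, mul_one]
  ring
end

section
/- For every even natural number n ≥ 4 one has 2 · ∑_{k=0}^{(n-4)/2} C(n-1,k) · C(n-1,k+1) + C(n-1, n/2)² = C(2n-2, n). -/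
/-!
Vandermonde's identity gives `∑_{k<N} C(N,k) C(N,k+1) = C(2N, N+1)`. For odd `N = 2m+1` the
summand is symmetric under `k ↦ 2m - k`, so the sum is twice its first `m` terms plus the middle
term `C(N,m) C(N,m+1) = C(N,m+1)²`.
-/

open Finset

theorem Finset.sum_range_palindrome {M : Type*} [AddCommMonoid M] (f : ℕ → M) (m : ℕ)
    (hf : ∀ k ≤ 2 * m, f (2 * m - k) = f k) :
    ∑ k ∈ range (2 * m + 1), f k = 2 • ∑ k ∈ range m, f k + f m := by
  have upper_half : ∑ i ∈ range m, f (m + (i + 1)) = ∑ k ∈ range m, f k := by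
    rw [← sum_range_reflect]
    refine sum_congr rfl fun j hj => ?_
    have hj : j < m := mem_range.mp hj
    rw [← hf j (by omega)]
    congr 1
    omega
  rw [show 2 * m + 1 = m + (m + 1) by omega, sum_range_add, sum_range_succ', upper_half,
    add_zero, two_nsmul, add_assoc]

theorem Nat.sum_range_choose_mul_choose_succ (N : ℕ) :
    ∑ k ∈ range N, N.choose k * N.choose (k + 1) = (2 * N).choose (N + 1) := by
  rw [two_mul, Nat.add_choose_eq, Nat.sum_antidiagonal_eq_sum_range_succ_mk, sum_range_succ',
    sum_range_succ]
  simp only [Nat.choose_succ_self, Nat.sub_zero, Nat.choose_zero_right, zero_mul, mul_zero,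
    add_zero]
  refine sum_congr rfl fun k hk => ?_
  rw [show N + 1 - (k + 1) = N - k by omega, Nat.choose_symm (mem_range.mp hk).le, mul_comm]

theorem Nat.two_mul_sum_range_choose_mul_choose_succ_add_sq (m : ℕ) :
    2 * ∑ k ∈ range m, (2 * m + 1).choose k * (2 * m + 1).choose (k + 1)
        + (2 * m + 1).choose (m + 1) ^ 2
      = (2 * (2 * m + 1)).choose (2 * m + 1 + 1) := by
  have symmetric : ∀ k ≤ 2 * m, (2 * m + 1).choose (2 * m - k) * (2 * m + 1).choose (2 * m - k + 1)
      = (2 * m + 1).choose k * (2 * m + 1).choose (k + 1) := fun k hk => by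
    rw [← Nat.choose_symm (show k + 1 ≤ 2 * m + 1 by omega),
      ← Nat.choose_symm (show k ≤ 2 * m + 1 by omega),
      show 2 * m + 1 - (k + 1) = 2 * m - k by omega,
      show 2 * m + 1 - k = 2 * m - k + 1 by omega, mul_comm]
  have middle : (2 * m + 1).choose m = (2 * m + 1).choose (m + 1) := by
    rw [← Nat.choose_symm (show m + 1 ≤ 2 * m + 1 by omega), show 2 * m + 1 - (m + 1) = m by omega]
  rw [← Nat.sum_range_choose_mul_choose_succ, sum_range_palindrome _ m symmetric, middle, sq,
    smul_eq_mul]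

theorem stmt_9 (n : ℕ) (hn : 4 ≤ n) (heven : Even n) :
    2 * (∑ k ∈ Finset.range ((n - 4) / 2 + 1), (n - 1).choose k * (n - 1).choose (k + 1))
        + ((n - 1).choose (n / 2)) ^ 2
      = (2 * n - 2).choose n := by
  obtain ⟨m, rfl⟩ : ∃ m, n = 2 * m + 2 := by
    obtain ⟨k, rfl⟩ := heven
    exact ⟨k - 1, by omega⟩
  rw [show (2 * m + 2 - 4) / 2 + 1 = m by omega, show 2 * m + 2 - 1 = 2 * m + 1 by omega,
    show (2 * m + 2) / 2 = m + 1 by omega, show 2 * (2 * m + 2) - 2 = 2 * (2 * m + 1) by omega]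
  exact Nat.two_mul_sum_range_choose_mul_choose_succ_add_sq m
end

section
/- Let m ≥ 1 be an integer and let r, a be nonzero complex numbers with a² ≠ 1. Set c = r^m and y_s = r · exp(2πi s/m) for s = 0, 1, …, m−1, and assume a^m ≠ c and a^{-m} ≠ c. Then for every integer ℓ with 0 ≤ ℓ ≤ m, (1/m) · ∑_{s=0}^{m-1} y_s^ℓ / (y_s + y_s^{-1} − a − a^{-1}) = −(1/(a − a^{-1})) · ( a^ℓ/(c^{-1} a^m − 1) − a^{-ℓ}/(c^{-1} a^{-m} − 1) ). -/
/-!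
Every `y = r ζ^s` satisfies `y^m = c`, so `1 / (y - x) = (∑_{j<m} x^j y^{m-1-j}) / (c - x^m)`.
Averaging over `s` kills every power `y^e` with `m ∤ e`, which leaves
`(1/m) ∑_s y_s^{k+1} / (y_s - x) = c x^k / (c - x^m)` for `k < m`. Since
`y^ℓ / (y + y⁻¹ - a - a⁻¹) = y^{ℓ+1} / ((y - a)(y - a⁻¹))`, partial fractions reduce the kernel
to this average for `ℓ < m`; the case `ℓ = m` reduces to `ℓ = 0` because `y_s^m = c`.
-/

open Finset

section

variable {K : Type*} [Field K] {m : ℕ} {ζ : K}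

theorem IsPrimitiveRoot.sum_pow_pow_eq_ite (hζ : IsPrimitiveRoot ζ m) (n : ℕ) :
    ∑ s ∈ range m, (ζ ^ s) ^ n = if m ∣ n then (m : K) else 0 := by
  simp_rw [← pow_mul, mul_comm _ n, pow_mul]
  split_ifs with hn
  · simp [(hζ.pow_eq_one_iff_dvd n).2 hn]
  · rw [geom_sum_eq ((hζ.pow_eq_one_iff_dvd n).not.2 hn), ← pow_mul, mul_comm, pow_mul,
      hζ.pow_eq_one, one_pow, sub_self, zero_div]

theorem IsPrimitiveRoot.mul_pow_eq_pow (hζ : IsPrimitiveRoot ζ m) (r : K) (s : ℕ) :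
    (r * ζ ^ s) ^ m = r ^ m := by
  rw [mul_pow, ← pow_mul, mul_comm s, pow_mul, hζ.pow_eq_one, one_pow, mul_one]

theorem sum_pow_succ_div_sub (hζ : IsPrimitiveRoot ζ m) (r x : K) (hx : x ^ m ≠ r ^ m)
    {k : ℕ} (hk : k < m) :
    ∑ s ∈ range m, (r * ζ ^ s) ^ (k + 1) / (r * ζ ^ s - x)
      = m * r ^ m * x ^ k / (r ^ m - x ^ m) := by
  have hD : r ^ m - x ^ m ≠ 0 := sub_ne_zero.2 hx.symm
  have expand : ∀ y : K, y ^ m = r ^ m →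
      y ^ (k + 1) / (y - x) = (∑ j ∈ range m, x ^ j * y ^ (m + k - j)) / (r ^ m - x ^ m) := by
    intro y hy
    have hyx : y - x ≠ 0 := sub_ne_zero.2 fun h => hx (by rw [← h, hy])
    have hshift : ∑ j ∈ range m, x ^ j * y ^ (m + k - j)
        = y ^ (k + 1) * ∑ j ∈ range m, x ^ j * y ^ (m - 1 - j) := by
      rw [mul_sum]
      refine sum_congr rfl fun j hj => ?_
      rw [mul_left_comm, ← pow_add]
      have := mem_range.1 hj
      congr 2
      omega
    rw [div_eq_div_iff hyx hD, hshift, ← hy, mul_assoc, ← neg_sub x y, mul_neg, geom_sum₂_mul]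
    ring
  have hdvd : ∀ j ∈ range m, m ∣ m + k - j ↔ j = k := by
    intro j hj
    have := mem_range.1 hj
    constructor
    · rintro ⟨t, ht⟩
      rcases t with _ | _ | t
      · omega
      · omega
      · have h2 : 2 * m ≤ m * (t + 1 + 1) := by nlinarith
        generalize m * (t + 1 + 1) = N at ht h2
        omega
    · rintro rfl
      simp
  rw [sum_congr rfl fun s _ => expand _ (hζ.mul_pow_eq_pow r s), ← sum_div, sum_comm]
  simp_rw [← mul_sum, mul_pow, ← mul_sum, hζ.sum_pow_pow_eq_ite]
  congr 1
  rw [sum_eq_single_of_mem k (mem_range.2 hk)]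
  · rw [if_pos ((hdvd k (mem_range.2 hk)).2 rfl), Nat.add_sub_cancel]
    ring
  · intro j hj hjk
    rw [if_neg (mt (hdvd j hj).1 hjk), mul_zero, mul_zero]

theorem pow_div_add_inv_sub_sub {y a b : K} (hy : y ≠ 0) (hab : a * b = 1) (hab' : a ≠ b)
    (hya : y ≠ a) (hyb : y ≠ b) (ℓ : ℕ) :
    y ^ ℓ / (y + y⁻¹ - a - b)
      = (y ^ (ℓ + 1) / (y - a) - y ^ (ℓ + 1) / (y - b)) / (a - b) := by
  have hfac : y + y⁻¹ - a - b = (y - a) * (y - b) / y := by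
    field_simp
    linear_combination -hab
  rw [hfac]
  field_simp [sub_ne_zero.2 hya, sub_ne_zero.2 hyb, sub_ne_zero.2 hab']
  ring

theorem sum_pow_div_add_inv_sub_sub_inv (hζ : IsPrimitiveRoot ζ m) {r a : K} (hr : r ≠ 0)
    (ha : a ≠ a⁻¹) (h₁ : a ^ m ≠ r ^ m) (h₂ : a⁻¹ ^ m ≠ r ^ m) {ℓ : ℕ} (hℓ : ℓ < m) :
    ∑ s ∈ range m, (r * ζ ^ s) ^ ℓ / (r * ζ ^ s + (r * ζ ^ s)⁻¹ - a - a⁻¹)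
      = m * r ^ m * (a ^ ℓ / (r ^ m - a ^ m) - a⁻¹ ^ ℓ / (r ^ m - a⁻¹ ^ m)) / (a - a⁻¹) := by
  have hne : ∀ s x, x ^ m ≠ r ^ m → r * ζ ^ s ≠ x := fun s x hx h =>
    hx (h ▸ hζ.mul_pow_eq_pow r s)
  have hζ0 : ζ ≠ 0 := hζ.ne_zero (by omega)
  have ha0 : a ≠ 0 := by rintro rfl; simp at ha
  rw [sum_congr rfl fun s _ => pow_div_add_inv_sub_sub (mul_ne_zero hr (pow_ne_zero s hζ0))
    (mul_inv_cancel₀ ha0) ha (hne s a h₁) (hne s _ h₂) ℓ, ← sum_div, sum_sub_distrib,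
    sum_pow_succ_div_sub hζ r a h₁ hℓ, sum_pow_succ_div_sub hζ r _ h₂ hℓ]
  ring

theorem div_inv_mul_sub_one {c : K} (hc : c ≠ 0) (x z : K) :
    z / (c⁻¹ * x - 1) = -(c * z / (c - x)) := by
  rw [inv_mul_eq_div, div_sub_one hc, div_div_eq_mul_div, mul_comm, ← neg_sub c x, div_neg]

end

theorem stmt_13 (m : ℕ) (hm : 1 ≤ m) (r a : ℂ) (hr : r ≠ 0) (ha : a ≠ 0)
    (ha2 : a ^ 2 ≠ 1) (c : ℂ) (hc : c = r ^ m)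
    (y : ℕ → ℂ) (hy : ∀ s, y s = r * Complex.exp (2 * Real.pi * Complex.I * s / m))
    (h1 : a ^ m ≠ c) (h2 : a⁻¹ ^ m ≠ c)
    (ℓ : ℕ) (hℓ : ℓ ≤ m) :
    (1 / (m : ℂ)) * ∑ s ∈ Finset.range m, (y s) ^ ℓ / (y s + (y s)⁻¹ - a - a⁻¹)
      = -(1 / (a - a⁻¹)) *
          (a ^ ℓ / (c⁻¹ * a ^ m - 1) - a⁻¹ ^ ℓ / (c⁻¹ * a⁻¹ ^ m - 1)) := by
  have hm0 : m ≠ 0 := by omega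
  set ζ := Complex.exp (2 * Real.pi * Complex.I / m)
  have hζ : IsPrimitiveRoot ζ m := Complex.isPrimitiveRoot_exp m hm0
  have hyζ : ∀ s, y s = r * ζ ^ s := fun s => by
    rw [hy, ← Complex.exp_nat_mul]
    ring_nf
  have haa : a ≠ a⁻¹ := fun h => ha2 (by rw [sq]; nth_rw 2 [h]; exact mul_inv_cancel₀ ha)
  subst hc
  simp_rw [hyζ, div_inv_mul_sub_one (pow_ne_zero m hr)]
  rcases hℓ.lt_or_eq with hℓ | rfl
  · rw [sum_pow_div_add_inv_sub_sub_inv hζ hr haa h1 h2 hℓ]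
    generalize a⁻¹ = b at *
    field_simp
    ring
  · have hsum : ∑ s ∈ range ℓ, (r * ζ ^ s) ^ ℓ / (r * ζ ^ s + (r * ζ ^ s)⁻¹ - a - a⁻¹)
        = r ^ ℓ * ∑ s ∈ range ℓ, (r * ζ ^ s) ^ 0 / (r * ζ ^ s + (r * ζ ^ s)⁻¹ - a - a⁻¹) := by
      rw [mul_sum]
      refine sum_congr rfl fun s _ => ?_
      rw [hζ.mul_pow_eq_pow, pow_zero, mul_one_div]
    rw [hsum, sum_pow_div_add_inv_sub_sub_inv hζ hr haa h1 h2 (by omega)]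
    generalize a⁻¹ = b at *
    field_simp
    ring
end

section
/- Let m ≥ 1 be an integer and let r, a be nonzero complex numbers with a² ≠ 1. Set c = r^m and y_s = r · exp(2πi s/m) for s = 0, 1, …, m−1, and assume a^m ≠ c and a^{-m} ≠ c. Then for every integer ℓ with 0 ≤ ℓ ≤ m, (1/m) · ∑_{s=0}^{m-1} y_s^{-ℓ} / (y_s + y_s^{-1} − a − a^{-1}) = −(1/(a − a^{-1})) · ( a^ℓ/(c a^m − 1) − a^{-ℓ}/(c a^{-m} − 1) ). -/
/-!
With `ξ` a primitive `m`-th root of unity, `x_s = (y s)⁻¹ = r⁻¹ ξ ^ s` runs over the `m`-th roots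
of `c⁻¹`, and partial fractions write the summand as
`(x ^ ℓ a⁻¹ / (a⁻¹ - x) - x ^ ℓ a / (a - x)) / (a - a⁻¹)`.
Over the roots of `X ^ m = d`, the sum of `x ^ ℓ v / (v - x)` is `m d v ^ ℓ / (v ^ m - d)` for
`1 ≤ ℓ ≤ m`, plus `m` when `ℓ = 0`; this extra term cancels in the difference of `v = a⁻¹` and
`v = a`, and `d = c⁻¹` gives the stated closed form.
-/

open Complex Finset

namespace IsPrimitiveRoot

variable {K : Type*} [Field K] {m : ℕ} {ξ : K}

theorem mul_pow_pow_eq_pow (hξ : IsPrimitiveRoot ξ m) (ρ : K) (s : ℕ) :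
    (ρ * ξ ^ s) ^ m = ρ ^ m := by
  rw [mul_pow, pow_right_comm, hξ.pow_eq_one, one_pow, mul_one]

theorem sum_mul_pow_pow_eq_zero (hξ : IsPrimitiveRoot ξ m) (ρ : K) {k : ℕ} (hk0 : k ≠ 0)
    (hkm : k < m) : ∑ s ∈ range m, (ρ * ξ ^ s) ^ k = 0 := by
  have hne : ξ ^ k ≠ 1 := hξ.pow_ne_one_of_pos_of_lt hk0 hkm
  simp_rw [mul_pow, ← mul_sum, pow_right_comm ξ _ k, geom_sum_eq hne, pow_right_comm,
    hξ.pow_eq_one, one_pow, sub_self, zero_div, mul_zero]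

/-- Writing `H k` for the sum, `H (k + 1) = v * (H k - ∑ (ρ * ξ ^ s) ^ k)`; the power sums vanish
for `0 < k < m`, so `H` is geometric on `1, …, m`, and `H m = ρ ^ m * H 0` closes the system. -/
theorem sum_mul_pow_pow_mul_div_sub (hξ : IsPrimitiveRoot ξ m) {ρ v : K} (hv : v ^ m ≠ ρ ^ m)
    {ℓ : ℕ} (hℓ : ℓ ≤ m) :
    ∑ s ∈ range m, (ρ * ξ ^ s) ^ ℓ * v / (v - ρ * ξ ^ s)
      = m * (ρ ^ m * v ^ ℓ / (v ^ m - ρ ^ m)) + if ℓ = 0 then (m : K) else 0 := by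
  obtain rfl | hm := m.eq_zero_or_pos
  · obtain rfl := Nat.le_zero.mp hℓ
    simp
  set H : ℕ → K := fun k ↦ ∑ s ∈ range m, (ρ * ξ ^ s) ^ k * v / (v - ρ * ξ ^ s) with hH
  have hden : ∀ s, v - ρ * ξ ^ s ≠ 0 := fun s h ↦
    hv (by rw [sub_eq_zero.mp h, hξ.mul_pow_pow_eq_pow])
  have hstep : ∀ k, H (k + 1) = v * (H k - ∑ s ∈ range m, (ρ * ξ ^ s) ^ k) := fun k ↦ by
    simp only [hH, ← sum_sub_distrib, mul_sum]
    refine sum_congr rfl fun s _ ↦ ?_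
    field_simp [hden s]
    ring
  have hgeom : ∀ k, 1 ≤ k → k ≤ m → H k = v ^ k * (H 0 - m) := by
    intro k hk
    induction k, hk using Nat.le_induction with
    | base => intro; simpa using hstep 0
    | succ k hk ih =>
      intro hkm
      rw [hstep, hξ.sum_mul_pow_pow_eq_zero ρ (by omega) hkm, sub_zero, ih (by omega), pow_succ]
      ring
  have hwrap : H m = ρ ^ m * H 0 := by
    simp only [hH, hξ.mul_pow_pow_eq_pow, pow_zero, one_mul, mul_sum, mul_div_assoc]
  have hH0 : H 0 - m = m * (ρ ^ m / (v ^ m - ρ ^ m)) := by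
    have := hgeom m hm le_rfl
    rw [hwrap] at this
    field_simp [sub_ne_zero.mpr hv]
    linear_combination -this
  rcases eq_or_ne ℓ 0 with rfl | hℓ0
  · change H 0 = _
    rw [if_pos rfl, pow_zero, mul_one]
    linear_combination hH0
  · change H ℓ = _
    rw [if_neg hℓ0, add_zero, hgeom ℓ (by omega) hℓ, hH0]
    ring

end IsPrimitiveRoot

theorem pow_div_inv_add_sub_sub {K : Type*} [Field K] {x a : K} (ℓ : ℕ) (hx : x ≠ 0)
    (ha : a ≠ a⁻¹) (hxa : x ≠ a) (hxa' : x ≠ a⁻¹) :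
    x ^ ℓ / (x⁻¹ + x - a - a⁻¹)
      = (x ^ ℓ * a⁻¹ / (a⁻¹ - x) - x ^ ℓ * a / (a - x)) / (a - a⁻¹) := by
  have ha0 : a ≠ 0 := by rintro rfl; simp at ha
  have h1 : a - x ≠ 0 := sub_ne_zero.mpr hxa.symm
  have h2 : a⁻¹ - x ≠ 0 := sub_ne_zero.mpr hxa'.symm
  have hden : x⁻¹ + x - a - a⁻¹ = x⁻¹ * (a - x) * (a⁻¹ - x) := by field_simp; ring
  rw [hden, div_sub_div _ _ h2 h1, div_div,
    div_eq_div_iff (by simp [*]) (by simp [*, sub_ne_zero])]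
  field_simp
  ring

theorem stmt_14 (m : ℕ) (hm : 1 ≤ m) (r a : ℂ) (hr : r ≠ 0) (ha : a ≠ 0)
    (ha2 : a ^ 2 ≠ 1) (c : ℂ) (hc : c = r ^ m)
    (y : ℕ → ℂ) (hy : ∀ s, y s = r * Complex.exp (2 * Real.pi * Complex.I * s / m))
    (h1 : a ^ m ≠ c) (h2 : a⁻¹ ^ m ≠ c)
    (ℓ : ℕ) (hℓ : ℓ ≤ m) :
    (1 / (m : ℂ)) * ∑ s ∈ Finset.range m, (y s)⁻¹ ^ ℓ / (y s + (y s)⁻¹ - a - a⁻¹)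
      = -(1 / (a - a⁻¹)) *
          (a ^ ℓ / (c * a ^ m - 1) - a⁻¹ ^ ℓ / (c * a⁻¹ ^ m - 1)) := by
  have hζ := (isPrimitiveRoot_exp m (by omega)).inv
  have hx : ∀ s, (y s)⁻¹ = r⁻¹ * (exp (2 * Real.pi * I / m))⁻¹ ^ s := fun s ↦ by
    rw [hy, mul_inv, inv_pow, ← exp_nat_mul]
    ring_nf
  have hc0 : c ≠ 0 := hc ▸ pow_ne_zero m hr
  have hρ : r⁻¹ ^ m = c⁻¹ := by rw [hc, inv_pow]
  have haa : a ≠ a⁻¹ := fun h ↦ ha2 (by rw [sq]; nth_rw 2 [h]; exact mul_inv_cancel₀ ha)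
  have hva : a ^ m ≠ c⁻¹ := by contrapose! h2; rw [inv_pow, h2, inv_inv]
  have hva' : a⁻¹ ^ m ≠ c⁻¹ := by rw [inv_pow]; exact inv_injective.ne h1
  have hxm : ∀ s, (y s)⁻¹ ^ m = c⁻¹ := fun s ↦ by rw [hx, hζ.mul_pow_pow_eq_pow, hρ]
  have hsummand : ∀ s, (y s)⁻¹ ^ ℓ / (y s + (y s)⁻¹ - a - a⁻¹)
      = ((y s)⁻¹ ^ ℓ * a⁻¹ / (a⁻¹ - (y s)⁻¹) - (y s)⁻¹ ^ ℓ * a / (a - (y s)⁻¹)) / (a - a⁻¹) :=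
    fun s ↦ by
      simpa only [inv_inv] using pow_div_inv_add_sub_sub ℓ
        (inv_ne_zero (by rw [hy]; exact mul_ne_zero hr (exp_ne_zero _))) haa
        (fun h ↦ hva (h ▸ hxm s)) (fun h ↦ hva' (h ▸ hxm s))
  rw [sum_congr rfl fun s _ ↦ hsummand s]
  simp only [hx]
  rw [← sum_div, sum_sub_distrib, hζ.sum_mul_pow_pow_mul_div_sub (hρ ▸ hva') hℓ,
    hζ.sum_mul_pow_pow_mul_div_sub (hρ ▸ hva) hℓ, add_sub_add_right_eq_sub, hρ]
  have hm0 : (m : ℂ) ≠ 0 := Nat.cast_ne_zero.mpr (by omega)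
  field_simp [sub_ne_zero.mpr hva, sub_ne_zero.mpr hva']
  ring
end
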